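/- arXiv:2512.08684 — 3 statements merged into one kernel-verified Lean document; each statement's English description precedes it below -/
import Mathlib

section
/- For every integer n ≥ 0 and every real x > 0, the quantity ϝ_n(x) := 2n/x + i_{n+1}(x)/i_n(x) − k_{n+1}(x)/k_n(x) is strictly negative. -/
open Real Finset

/-- Modified spherical Bessel function of the second kind `k_n`, explicit closed form. -/
noncomputable def kBes (n : ℕ) (x : ℝ) : ℝ :=
  (Real.exp (-x) / x) *
    ∑ l ∈ Finset.range (n + 1),
      (Nat.factorial (n + l) : ℝ) /
        ((Nat.factorial l : ℝ) * (Nat.factorial (n - l) : ℝ) * (2 * x) ^ l)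

/-- Modified spherical Bessel function of the first kind `i_n`, explicit closed form. -/
noncomputable def iBes (n : ℕ) (x : ℝ) : ℝ :=
  (1 / (2 * x)) *
    (Real.exp x *
        ∑ l ∈ Finset.range (n + 1),
          (-1 : ℝ) ^ l * (Nat.factorial (n + l) : ℝ) /
            ((Nat.factorial l : ℝ) * (Nat.factorial (n - l) : ℝ) * (2 * x) ^ l)
      + (-1 : ℝ) ^ (n + 1) * Real.exp (-x) *
        ∑ l ∈ Finset.range (n + 1),
          (Nat.factorial (n + l) : ℝ) /
            ((Nat.factorial l : ℝ) * (Nat.factorial (n - l) : ℝ) * (2 * x) ^ l))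

/-!
Write `θ_n` for the reverse Bessel polynomials, `θ_{n+2} = (2n+3) θ_{n+1} + x² θ_n`, and
`φ_n(x) = (-1)^n (e^x θ_n(-x) - e^{-x} θ_n(x)) = 2 x^{n+1} i_n(x)`. Then
`k_{n+1}/k_n = θ_{n+1}/(x θ_n)` and `i_{n+1}/i_n = φ_{n+1}/(x φ_n)`, so it suffices to show
`θ_{n+1}/θ_n ≥ n + 1 + √(n² + x²)` and `φ_{n+1}/φ_n < √(n² + x²) - n + 1`.

The first bound is proved by induction on `n`, together with the upper bound
`θ_{n+1}/θ_n ≤ n + 1 + √((n+1)² + x²)`, each feeding the other through the recurrence.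
For the second, `φ_n > 0` on `x > 0` since `φ_{n+1}' = x φ_n` and `φ_{n+1}(0) = 0`.
The recurrence `φ_{n+2} = x² φ_n - (2n+3) φ_{n+1}` then gives `φ_{n+1}/φ_n < x²/(2n+3)`,
which settles every `n` with `x² ≤ 2n+3`, and from there the bound propagates down from
`n + 2` to `n`.
-/

open scoped Nat

-- `(n + l)! / (2 ^ l * l! * (n - l)!)`, in a form that vanishes for `l > n`
def besselCoeff (n l : ℕ) : ℕ := (n + l).choose (2 * l) * (2 * l - 1)‼

namespace besselCoeff

@[simp] lemma zero_right (n : ℕ) : besselCoeff n 0 = 1 := by simp [besselCoeff]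

lemma eq_zero_of_lt {n l : ℕ} (h : n < l) : besselCoeff n l = 0 := by
  simp [besselCoeff, Nat.choose_eq_zero_of_lt (by omega : n + l < 2 * l)]

lemma mul_factorial_mul_factorial {n l : ℕ} (h : l ≤ n) :
    besselCoeff n l * 2 ^ l * l ! * (n - l)! = (n + l)! := by
  have hodd : (2 * l - 1)‼ * 2 ^ l * l ! = (2 * l)! := by
    rcases l with _ | l
    · simp
    · rw [show 2 * (l + 1) - 1 = 2 * l + 1 by omega, mul_assoc, ← Nat.doubleFactorial_two_mul,
        show 2 * (l + 1) = 2 * l + 1 + 1 by ring, Nat.factorial_eq_mul_doubleFactorial, mul_comm]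
  have hchoose := Nat.choose_mul_factorial_mul_factorial (show 2 * l ≤ n + l by omega)
  rw [show n + l - 2 * l = n - l by omega] at hchoose
  rw [← hchoose, ← hodd, besselCoeff]
  ring

lemma succ_succ (n l : ℕ) :
    besselCoeff (n + 2) (l + 1) = besselCoeff n (l + 1) + (2 * n + 3) * besselCoeff (n + 1) l := by
  set m := n + l + 1
  have hodd : (2 * (l + 1) - 1)‼ = (2 * l + 1) * (2 * l - 1)‼ := by
    rw [show 2 * (l + 1) - 1 = 2 * l + 1 by omega, Nat.doubleFactorial_add_one]
  have hpascal : (n + 2 + (l + 1)).choose (2 * (l + 1)) =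
      m.choose (2 * l) + 2 * m.choose (2 * l + 1) + m.choose (2 * (l + 1)) := by
    rw [show n + 2 + (l + 1) = m + 1 + 1 by omega, show 2 * (l + 1) = 2 * l + 1 + 1 by ring]
    simp only [Nat.choose_succ_succ]
    ring
  -- `(k + 1) * C(m, k + 1) = (m - k) * C(m, k)` with `k = 2 * l`
  have key : (m.choose (2 * l) + 2 * m.choose (2 * l + 1)) * (2 * l + 1) =
      (2 * n + 3) * m.choose (2 * l) := by
    rcases le_or_gt l (n + 1) with hl | hl
    · calc _ = m.choose (2 * l) * (2 * l + 1 + 2 * (m - 2 * l)) := by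
            rw [add_mul, mul_assoc, Nat.choose_succ_right_eq]; ring
        _ = _ := by rw [show 2 * l + 1 + 2 * (m - 2 * l) = 2 * n + 3 by omega]; ring
    · simp [Nat.choose_eq_zero_of_lt (by omega : m < 2 * l),
        Nat.choose_eq_zero_of_lt (by omega : m < 2 * l + 1)]
  unfold besselCoeff
  rw [hodd, hpascal, show n + (l + 1) = m by omega, show n + 1 + l = m by omega]
  calc _ = (m.choose (2 * l) + 2 * m.choose (2 * l + 1)) * (2 * l + 1) * (2 * l - 1)‼ +
        m.choose (2 * (l + 1)) * ((2 * l + 1) * (2 * l - 1)‼) := by ring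
    _ = _ := by rw [key]; ring

end besselCoeff

noncomputable def besselPoly (n : ℕ) (u : ℝ) : ℝ :=
  ∑ l ∈ range (n + 1), (besselCoeff n l : ℝ) * u ^ l

lemma besselPoly_eq_sum_range {n m : ℕ} (h : n + 1 ≤ m) (u : ℝ) :
    besselPoly n u = ∑ l ∈ range m, (besselCoeff n l : ℝ) * u ^ l :=
  sum_subset (range_subset_range.2 h) fun l _ hl => by
    simp [besselCoeff.eq_zero_of_lt (show n < l by simpa using hl)]

lemma besselPoly_succ_succ (n : ℕ) (u : ℝ) :
    besselPoly (n + 2) u = besselPoly n u + (2 * n + 3) * u * besselPoly (n + 1) u := by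
  have hterm (l : ℕ) : (besselCoeff (n + 2) (l + 1) : ℝ) * u ^ (l + 1) =
      besselCoeff n (l + 1) * u ^ (l + 1) + (2 * n + 3) * u * (besselCoeff (n + 1) l * u ^ l) := by
    rw [besselCoeff.succ_succ]; push_cast; ring
  rw [besselPoly_eq_sum_range (show n + 1 ≤ n + 2 + 1 by omega), besselPoly, besselPoly,
    sum_range_succ' _ (n + 2), sum_range_succ' _ (n + 2)]
  simp only [hterm, sum_add_distrib, ← mul_sum, besselCoeff.zero_right]
  ring

lemma sum_factorial_div_eq_besselPoly (n : ℕ) {x : ℝ} (hx : x ≠ 0) :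
    ∑ l ∈ range (n + 1), ((n + l)! : ℝ) / ((l ! : ℝ) * ((n - l)! : ℝ) * (2 * x) ^ l) =
      besselPoly n x⁻¹ := by
  refine sum_congr rfl fun l hl => ?_
  rw [← besselCoeff.mul_factorial_mul_factorial (Nat.lt_succ_iff.1 (mem_range.1 hl))]
  push_cast
  rw [mul_pow, inv_pow]
  field_simp

lemma sum_neg_one_pow_factorial_div_eq_besselPoly (n : ℕ) {x : ℝ} (hx : x ≠ 0) :
    ∑ l ∈ range (n + 1),
        (-1 : ℝ) ^ l * ((n + l)! : ℝ) / ((l ! : ℝ) * ((n - l)! : ℝ) * (2 * x) ^ l) =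
      besselPoly n (-x⁻¹) := by
  refine sum_congr rfl fun l hl => ?_
  rw [← besselCoeff.mul_factorial_mul_factorial (Nat.lt_succ_iff.1 (mem_range.1 hl))]
  push_cast
  rw [mul_pow, neg_pow x⁻¹, inv_pow]
  field_simp

noncomputable def revBessel : ℕ → ℝ → ℝ
  | 0, _ => 1
  | 1, x => x + 1
  | n + 2, x => (2 * n + 3) * revBessel (n + 1) x + x ^ 2 * revBessel n x

lemma revBessel_succ_succ (n : ℕ) (x : ℝ) :
    revBessel (n + 2) x = (2 * n + 3) * revBessel (n + 1) x + x ^ 2 * revBessel n x := rfl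

lemma revBessel_eq_pow_mul_besselPoly {x : ℝ} (hx : x ≠ 0) (n : ℕ) :
    revBessel n x = x ^ n * besselPoly n x⁻¹ := by
  induction n using Nat.twoStepInduction with
  | zero => simp [revBessel, besselPoly]
  | one => simp [revBessel, besselPoly, sum_range_succ, besselCoeff]; field_simp
  | more n ih₀ ih₁ =>
    rw [revBessel_succ_succ, ih₀, ih₁, besselPoly_succ_succ]
    field_simp
    ring

lemma revBessel_pos {x : ℝ} (hx : 0 ≤ x) (n : ℕ) : 0 < revBessel n x := by
  induction n using Nat.twoStepInduction with
  | zero => simp [revBessel]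
  | one => simp only [revBessel]; linarith
  | more n ih₀ ih₁ =>
    rw [revBessel_succ_succ]
    exact add_pos_of_pos_of_nonneg (mul_pos (by positivity) ih₁)
      (mul_nonneg (sq_nonneg x) ih₀.le)

lemma HasDerivAt.revBessel_succ_succ {n : ℕ} {x d₀ d₁ : ℝ}
    (h₀ : HasDerivAt (revBessel n) d₀ x) (h₁ : HasDerivAt (revBessel (n + 1)) d₁ x) :
    HasDerivAt (revBessel (n + 2))
      ((2 * n + 3) * d₁ + (2 * x * revBessel n x + x ^ 2 * d₀)) x :=
  ((h₁.const_mul _).add ((hasDerivAt_pow 2 x).mul h₀)).congr_deriv (by push_cast; ring)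

lemma hasDerivAt_revBessel_succ (n : ℕ) (x : ℝ) :
    HasDerivAt (revBessel (n + 1)) (revBessel (n + 1) x - x * revBessel n x) x := by
  induction n using Nat.twoStepInduction generalizing x with
  | zero => exact ((hasDerivAt_id x).add_const 1).congr_deriv (by simp [revBessel])
  | one =>
    exact (HasDerivAt.revBessel_succ_succ (n := 0) (hasDerivAt_const x 1)
      ((hasDerivAt_id x).add_const 1)).congr_deriv (by simp [revBessel]; ring)
  | more n ih₀ ih₁ =>
    refine ((ih₀ x).revBessel_succ_succ (ih₁ x)).congr_deriv ?_
    simp only [revBessel_succ_succ]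
    push_cast
    ring

noncomputable def scaledBesselI (n : ℕ) (x : ℝ) : ℝ :=
  (-1) ^ n * (exp x * revBessel n (-x) - exp (-x) * revBessel n x)

lemma scaledBesselI_succ_succ (n : ℕ) (x : ℝ) :
    scaledBesselI (n + 2) x =
      x ^ 2 * scaledBesselI n x - (2 * n + 3) * scaledBesselI (n + 1) x := by
  simp only [scaledBesselI, revBessel_succ_succ]
  ring

lemma hasDerivAt_scaledBesselI_succ (n : ℕ) (x : ℝ) :
    HasDerivAt (scaledBesselI (n + 1)) (x * scaledBesselI n x) x := by
  have h := ((Real.hasDerivAt_exp x).mul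
      ((hasDerivAt_revBessel_succ n (-x)).comp x (hasDerivAt_neg x))).sub
    (((Real.hasDerivAt_exp (-x)).comp x (hasDerivAt_neg x)).mul (hasDerivAt_revBessel_succ n x))
  refine (h.const_mul ((-1 : ℝ) ^ (n + 1))).congr_deriv ?_
  simp only [scaledBesselI, Function.comp_apply]
  ring

lemma scaledBesselI_pos (n : ℕ) {x : ℝ} (hx : 0 < x) : 0 < scaledBesselI n x := by
  induction n generalizing x with
  | zero => simpa [scaledBesselI, revBessel] using exp_lt_exp.2 (neg_lt_self hx)
  | succ n ih =>
    have hmono : StrictMonoOn (scaledBesselI (n + 1)) (Set.Ici 0) :=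
      strictMonoOn_of_deriv_pos (convex_Ici 0)
        (continuous_iff_continuousAt.2 fun y =>
          (hasDerivAt_scaledBesselI_succ n y).continuousAt).continuousOn
        fun y hy => by
          rw [interior_Ici] at hy
          rw [(hasDerivAt_scaledBesselI_succ n y).deriv]
          exact mul_pos hy (ih hy)
    simpa [scaledBesselI] using hmono Set.self_mem_Ici hx.le hx

lemma kBes_eq {x : ℝ} (hx : x ≠ 0) (n : ℕ) :
    kBes n x = exp (-x) * revBessel n x / x ^ (n + 1) := by
  rw [kBes, sum_factorial_div_eq_besselPoly n hx, revBessel_eq_pow_mul_besselPoly hx]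
  field_simp
  ring

lemma iBes_eq {x : ℝ} (hx : x ≠ 0) (n : ℕ) :
    iBes n x = scaledBesselI n x / (2 * x ^ (n + 1)) := by
  have hsign : (-1 : ℝ) ^ n * (-1) ^ n = 1 := by rw [← mul_pow]; norm_num
  rw [iBes, sum_factorial_div_eq_besselPoly n hx, sum_neg_one_pow_factorial_div_eq_besselPoly n hx,
    scaledBesselI, revBessel_eq_pow_mul_besselPoly hx,
    revBessel_eq_pow_mul_besselPoly (neg_ne_zero.2 hx), inv_neg, neg_pow x]
  generalize besselPoly n (-x⁻¹) = b
  field_simp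
  linear_combination (-(exp x * b * x ^ (n + 1))) * hsign

lemma kBes_succ_div {x : ℝ} (hx : 0 < x) (n : ℕ) :
    kBes (n + 1) x / kBes n x = revBessel (n + 1) x / revBessel n x / x := by
  have := (revBessel_pos hx.le n).ne'
  rw [kBes_eq hx.ne', kBes_eq hx.ne']
  field_simp
  ring

lemma iBes_succ_div {x : ℝ} (hx : 0 < x) (n : ℕ) :
    iBes (n + 1) x / iBes n x = scaledBesselI (n + 1) x / scaledBesselI n x / x := by
  have := (scaledBesselI_pos n hx).ne'
  rw [iBes_eq hx.ne', iBes_eq hx.ne']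
  field_simp
  ring

section SqrtBounds

variable {a : ℝ} (x : ℝ)

lemma le_sqrt_sq_add_sq : a ≤ √(a ^ 2 + x ^ 2) :=
  Real.le_sqrt_of_sq_le (by nlinarith [sq_nonneg x])

lemma sqrt_sq_add_sq_le_sqrt_add_two_sq (ha : 0 ≤ a) :
    √(a ^ 2 + x ^ 2) ≤ √((a + 2) ^ 2 + x ^ 2) :=
  Real.sqrt_le_sqrt (by nlinarith [ha])

lemma sqrt_add_two_sq_le_sqrt_add_two : √((a + 2) ^ 2 + x ^ 2) ≤ √(a ^ 2 + x ^ 2) + 2 :=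
  Real.sqrt_le_iff.2 ⟨by positivity, by
    nlinarith [Real.sq_sqrt (by positivity : 0 ≤ a ^ 2 + x ^ 2), le_sqrt_sq_add_sq (a := a) x]⟩

lemma sq_le_sqrt_add_two_sub_mul (ha : 0 ≤ a) :
    x ^ 2 ≤ (√((a + 2) ^ 2 + x ^ 2) - (a + 1)) * (√(a ^ 2 + x ^ 2) + a + 1) := by
  set s₀ := √(a ^ 2 + x ^ 2)
  set s₂ := √((a + 2) ^ 2 + x ^ 2)
  have h₀ : s₀ ^ 2 = a ^ 2 + x ^ 2 := Real.sq_sqrt (by positivity)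
  have h₂ : s₂ ^ 2 = (a + 2) ^ 2 + x ^ 2 := Real.sq_sqrt (by positivity)
  have hs₀ : a ≤ s₀ := le_sqrt_sq_add_sq x
  have hgap : s₂ ≤ s₀ + 2 := sqrt_add_two_sq_le_sqrt_add_two x
  have hmono : s₀ ≤ s₂ := sqrt_sq_add_sq_le_sqrt_add_two_sq x ha
  -- `(s₂ - s₀) * (s₂ + s₀) = 4 * (a + 1)` and `s₂ + s₀ ≤ 2 * (s₀ + a + 1)`
  have hdiff : 2 * (a + 1) ≤ (s₂ - s₀) * (s₀ + a + 1) := by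
    nlinarith [mul_le_mul_of_nonneg_left (show s₂ + s₀ ≤ 2 * (s₀ + a + 1) by linarith)
      (sub_nonneg.2 hmono)]
  nlinarith

lemma sq_mul_le_sqrt_sub_add_one_mul (ha : 0 ≤ a) :
    x ^ 2 * (√((a + 2) ^ 2 + x ^ 2) + a + 4) ≤
      (√(a ^ 2 + x ^ 2) - a + 1) *
        (x ^ 2 + (2 * a + 3) * (√((a + 2) ^ 2 + x ^ 2) + a + 4)) := by
  set s₀ := √(a ^ 2 + x ^ 2)
  set s₂ := √((a + 2) ^ 2 + x ^ 2)
  have h₀ : s₀ ^ 2 = a ^ 2 + x ^ 2 := Real.sq_sqrt (by positivity)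
  have h₂ : s₂ ^ 2 = (a + 2) ^ 2 + x ^ 2 := Real.sq_sqrt (by positivity)
  have hs₀ : a ≤ s₀ := le_sqrt_sq_add_sq x
  have hmono : s₀ ≤ s₂ := sqrt_sq_add_sq_le_sqrt_add_two_sq x ha
  have hkey : (s₀ + a) * (s₂ - s₀ + 2 * a + 3) ≤ (2 * a + 3) * (s₂ + a + 4) := by
    nlinarith [mul_le_mul_of_nonneg_right (show s₀ + a ≤ s₂ + s₀ by linarith)
      (sub_nonneg.2 hmono)]
  have hx : x ^ 2 = (s₀ - a) * (s₀ + a) := by linear_combination -h₀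
  rw [hx]
  nlinarith [mul_nonneg (sub_nonneg.2 hs₀) (sub_nonneg.2 hkey)]

end SqrtBounds

lemma revBessel_succ_bounds {x : ℝ} (hx : 0 ≤ x) (n : ℕ) :
    (n + 1 + √(n ^ 2 + x ^ 2)) * revBessel n x ≤ revBessel (n + 1) x ∧
      revBessel (n + 1) x ≤ (n + 1 + √((n + 1) ^ 2 + x ^ 2)) * revBessel n x := by
  induction n with
  | zero =>
    norm_num [revBessel, Real.sqrt_sq hx]
    exact ⟨(add_comm _ _).le,
      by linarith [Real.le_sqrt_of_sq_le (show x ^ 2 ≤ 1 + x ^ 2 by linarith)]⟩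
  | succ n ih =>
    obtain ⟨hlow, hup⟩ := ih
    have hθ₀ := revBessel_pos hx n
    have h₁ : √((n + 1) ^ 2 + x ^ 2) ^ 2 = (n + 1) ^ 2 + x ^ 2 := Real.sq_sqrt (by positivity)
    have hs₁ := le_sqrt_sq_add_sq (a := (n : ℝ) + 1) x
    have hs₂ := le_sqrt_sq_add_sq (a := (n : ℝ) + 2) x
    have hsq := sq_le_sqrt_add_two_sub_mul x n.cast_nonneg
    rw [revBessel_succ_succ]
    push_cast
    rw [show (n : ℝ) + 1 + 1 = n + 2 by ring]
    constructor
    · -- `x ^ 2 = (s₁ - (n + 1)) * (s₁ + (n + 1))`, and the upper bound at `n`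
      nlinarith [mul_le_mul_of_nonneg_left hup (sub_nonneg.2 hs₁)]
    · nlinarith [mul_le_mul_of_nonneg_right hsq hθ₀.le, mul_le_mul_of_nonneg_left hlow
        (show 0 ≤ √((n + 2) ^ 2 + x ^ 2) - (n + 1) by linarith)]

section ScaledBesselIRatio

variable {x : ℝ} (hx : 0 < x)
include hx

lemma scaledBesselI_succ_lt_of_sq_le {n : ℕ} (hn : x ^ 2 ≤ 2 * n + 3) :
    scaledBesselI (n + 1) x < (√(n ^ 2 + x ^ 2) - n + 1) * scaledBesselI n x := by
  have hrec := scaledBesselI_succ_succ n x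
  have hφ₂ := scaledBesselI_pos (n + 2) hx
  have hφ₀ := scaledBesselI_pos n hx
  have hs := le_sqrt_sq_add_sq (a := (n : ℝ)) x
  have hlt : (2 * n + 3) * scaledBesselI (n + 1) x < (2 * n + 3) * scaledBesselI n x := by
    nlinarith [mul_le_mul_of_nonneg_right hn hφ₀.le]
  nlinarith [lt_of_mul_lt_mul_left hlt (by positivity), mul_le_mul_of_nonneg_right hs hφ₀.le]

lemma scaledBesselI_succ_lt_of_succ_succ_lt (n : ℕ)
    (h : scaledBesselI (n + 3) x <
      (√((n + 2) ^ 2 + x ^ 2) - (n + 2) + 1) * scaledBesselI (n + 2) x) :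
    scaledBesselI (n + 1) x < (√(n ^ 2 + x ^ 2) - n + 1) * scaledBesselI n x := by
  set s₀ := √(n ^ 2 + x ^ 2)
  set t := √((n + 2) ^ 2 + x ^ 2) + n + 4
  have hφ₁ := scaledBesselI_pos (n + 1) hx
  have hrec₀ := scaledBesselI_succ_succ n x
  have hrec₁ : scaledBesselI (n + 3) x =
      x ^ 2 * scaledBesselI (n + 1) x - (2 * n + 5) * scaledBesselI (n + 2) x := by
    rw [scaledBesselI_succ_succ (n + 1)]; push_cast; ring
  have hlow : x ^ 2 * scaledBesselI (n + 1) x < t * scaledBesselI (n + 2) x := by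
    linarith
  have hs₀ : 0 < s₀ - n + 1 := by linarith [le_sqrt_sq_add_sq (a := (n : ℝ)) x]
  have ht : 0 < x ^ 2 * t := by positivity
  refine lt_of_mul_lt_mul_left ?_ ht.le
  calc x ^ 2 * t * scaledBesselI (n + 1) x
      ≤ (s₀ - n + 1) * (x ^ 2 + (2 * n + 3) * t) * scaledBesselI (n + 1) x :=
        mul_le_mul_of_nonneg_right (sq_mul_le_sqrt_sub_add_one_mul x n.cast_nonneg) hφ₁.le
    _ < (s₀ - n + 1) *
          (t * scaledBesselI (n + 2) x + (2 * n + 3) * t * scaledBesselI (n + 1) x) := by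
        nlinarith [mul_lt_mul_of_pos_left hlow hs₀]
    _ = x ^ 2 * t * ((s₀ - n + 1) * scaledBesselI n x) := by rw [hrec₀]; ring

lemma scaledBesselI_succ_lt (n : ℕ) :
    scaledBesselI (n + 1) x < (√(n ^ 2 + x ^ 2) - n + 1) * scaledBesselI n x := by
  obtain ⟨m, hm⟩ := exists_nat_ge (x ^ 2)
  replace hm : x ^ 2 ≤ 2 * n + 3 + 2 * m := by linarith [n.cast_nonneg (α := ℝ)]
  induction m generalizing n with
  | zero => exact scaledBesselI_succ_lt_of_sq_le hx (by simpa using hm)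
  | succ m ih =>
    have h := ih (n + 2) (by push_cast at hm ⊢; linarith)
    push_cast at h
    exact scaledBesselI_succ_lt_of_succ_succ_lt hx n h

end ScaledBesselIRatio

/-- For every integer `n ≥ 0` and every real `x > 0`, the quantity
`ϝ_n(x) = 2n/x + i_{n+1}(x)/i_n(x) − k_{n+1}(x)/k_n(x)` is strictly negative. -/
theorem digamma_neg (n : ℕ) (x : ℝ) (hx : 0 < x) :
    2 * (n : ℝ) / x + iBes (n + 1) x / iBes n x - kBes (n + 1) x / kBes n x < 0 := by
  have hi : scaledBesselI (n + 1) x / scaledBesselI n x < √(n ^ 2 + x ^ 2) - n + 1 :=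
    (div_lt_iff₀ (scaledBesselI_pos n hx)).2 (by linarith [scaledBesselI_succ_lt hx n])
  have hk : n + 1 + √(n ^ 2 + x ^ 2) ≤ revBessel (n + 1) x / revBessel n x :=
    (le_div_iff₀ (revBessel_pos hx.le n)).2 (revBessel_succ_bounds hx.le n).1
  rw [iBes_succ_div hx, kBes_succ_div hx, ← add_div, ← sub_div]
  exact div_neg_of_neg_of_pos (by linarith) hx
end

section
/- For every integer n ≥ 0, every real x > 0, and all reals ε ≥ 0 and ε_s > 0, the coefficient α_n(x, ε) := (ε − ε_s)·n·k_n(x)/x + ε_s·k_{n+1}(x) is strictly positive. -/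
open Real Finset

lemma kBes_term_pos (n : ℕ) (x : ℝ) (hx : 0 < x) (l : ℕ) :
    0 < (Nat.factorial (n + l) : ℝ) /
        ((Nat.factorial l : ℝ) * (Nat.factorial (n - l) : ℝ) * (2 * x) ^ l) := by
  positivity

lemma kBes_pos (n : ℕ) (x : ℝ) (hx : 0 < x) : 0 < kBes n x := by
  unfold kBes
  apply mul_pos (by positivity)
  apply Finset.sum_pos (fun l _ => kBes_term_pos n x hx l)
  exact Finset.nonempty_range_add_one

lemma key (n : ℕ) (x : ℝ) (hx : 0 < x) :
    (n : ℝ) * kBes n x < x * kBes (n + 1) x := by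
  unfold kBes
  have he : 0 < Real.exp (-x) / x := by positivity
  rw [show (n : ℝ) * (Real.exp (-x) / x * ∑ l ∈ Finset.range (n + 1),
      (Nat.factorial (n + l) : ℝ) /
        ((Nat.factorial l : ℝ) * (Nat.factorial (n - l) : ℝ) * (2 * x) ^ l))
      = (Real.exp (-x) / x) * ((n : ℝ) * ∑ l ∈ Finset.range (n + 1),
      (Nat.factorial (n + l) : ℝ) /
        ((Nat.factorial l : ℝ) * (Nat.factorial (n - l) : ℝ) * (2 * x) ^ l)) by ring,
    show x * (Real.exp (-x) / x * ∑ l ∈ Finset.range (n + 1 + 1),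
      (Nat.factorial (n + 1 + l) : ℝ) /
        ((Nat.factorial l : ℝ) * (Nat.factorial (n + 1 - l) : ℝ) * (2 * x) ^ l))
      = (Real.exp (-x) / x) * (x * ∑ l ∈ Finset.range (n + 1 + 1),
      (Nat.factorial (n + 1 + l) : ℝ) /
        ((Nat.factorial l : ℝ) * (Nat.factorial (n + 1 - l) : ℝ) * (2 * x) ^ l)) by ring]
  apply mul_lt_mul_of_pos_left _ he
  rw [Finset.mul_sum, Finset.mul_sum, Finset.sum_range_succ' (fun l => x * _) (n + 1)]
  have hb0 : 0 < x * ((Nat.factorial (n + 1 + 0) : ℝ) /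
      ((Nat.factorial 0 : ℝ) * (Nat.factorial (n + 1 - 0) : ℝ) * (2 * x) ^ 0)) := by
    positivity
  have hterm : ∀ m ∈ Finset.range (n + 1),
      (n : ℝ) * ((Nat.factorial (n + m) : ℝ) /
        ((Nat.factorial m : ℝ) * (Nat.factorial (n - m) : ℝ) * (2 * x) ^ m))
      ≤ x * ((Nat.factorial (n + 1 + (m + 1)) : ℝ) /
        ((Nat.factorial (m + 1) : ℝ) * (Nat.factorial (n + 1 - (m + 1)) : ℝ) * (2 * x) ^ (m + 1))) := by
    intro m _
    have hsub : n + 1 - (m + 1) = n - m := by omega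
    have hfac : (Nat.factorial (n + 1 + (m + 1)) : ℝ)
        = ((n + m + 2 : ℕ) : ℝ) * ((n + m + 1 : ℕ) : ℝ) * (Nat.factorial (n + m) : ℝ) := by
      rw [show n + 1 + (m + 1) = (n + m + 1) + 1 by ring, Nat.factorial_succ,
        show n + m + 1 = (n + m) + 1 from rfl, Nat.factorial_succ]
      push_cast; ring
    have hfacm : (Nat.factorial (m + 1) : ℝ) = ((m + 1 : ℕ) : ℝ) * (Nat.factorial m : ℝ) := by
      rw [Nat.factorial_succ]; push_cast; ring
    rw [hsub, hfac, hfacm, pow_succ]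
    have hF : (0 : ℝ) < (Nat.factorial (n + m) : ℝ) := by positivity
    have hm : (0 : ℝ) < (Nat.factorial m : ℝ) := by positivity
    have hd : (0 : ℝ) < (Nat.factorial (n - m) : ℝ) := by positivity
    have hp : (0 : ℝ) < (2 * x) ^ m := by positivity
    have hkey : 2 * ((m : ℝ) + 1) * (n : ℝ) ≤ ((n : ℝ) + (m : ℝ) + 2) * ((n : ℝ) + (m : ℝ) + 1) := by
      nlinarith [sq_nonneg ((n : ℝ) - (m : ℝ) - 1)]
    rw [mul_div_assoc', mul_div_assoc', div_le_div_iff₀ (by positivity) (by positivity)]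
    have hpos : (0:ℝ) < (Nat.factorial (n + m) : ℝ) * (Nat.factorial m : ℝ) *
        (Nat.factorial (n - m) : ℝ) * (2 * x) ^ m * x := by positivity
    have h2 := mul_le_mul_of_nonneg_right hkey hpos.le
    push_cast
    nlinarith [h2]
  exact (Finset.sum_le_sum hterm).trans_lt (lt_add_of_pos_right _ hb0)

/-- For every integer `n ≥ 0`, every real `x > 0`, and all reals `ε ≥ 0`, `ε_s > 0`,
the coefficient `α_n(x, ε) = (ε − ε_s)·n·k_n(x)/x + ε_s·k_{n+1}(x)` is strictly positive. -/
theorem alpha_pos (n : ℕ) (x : ℝ) (hx : 0 < x) (eps epss : ℝ)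
    (heps : 0 ≤ eps) (hepss : 0 < epss) :
    0 < (eps - epss) * (n : ℝ) * kBes n x / x + epss * kBes (n + 1) x := by
  have hk := kBes_pos n x hx
  have hkey := key n x hx
  rw [div_add' _ _ _ (ne_of_gt hx)]
  apply div_pos _ hx
  nlinarith [mul_pos hepss (sub_pos.2 hkey),
    mul_nonneg (mul_nonneg heps (Nat.cast_nonneg n : (0:ℝ) ≤ n)) hk.le]
end

section
/- For every integer n ≥ 0 and every real x > 0, one has n·k_n(x) − x·k_{n+1}(x) < 0; equivalently the derivative of k_n is strictly negative at every x > 0, so k_n is strictly decreasing on (0, ∞). -/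
/-!
Write `k_n(x) = e^{-x} ∑_{l ≤ n} a_{n,l} / x^{l+1}` with positive coefficients
`a_{n,l} = (n+l)! / (l! (n-l)! 2^l)`. The Pascal-type recurrence
`a_{n+1,l+1} = a_{n,l+1} + (n+l+1) a_{n,l}` turns `n k_n(x) - x k_{n+1}(x)` into
`-e^{-x} ∑_{l ≤ n} a_{n,l} (x+l+1) / x^{l+1}`, which is visibly negative for `x > 0`;
differentiating the sum term by term shows that the same expression is `x k_n'(x)`.
-/

open Real Finset
open scoped Nat

noncomputable def kBesCoeff (n l : ℕ) : ℝ :=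
  ((n + l)! : ℝ) / (l ! * (n - l)! * 2 ^ l)

lemma kBesCoeff_pos (n l : ℕ) : 0 < kBesCoeff n l := by
  unfold kBesCoeff
  positivity

lemma kBesCoeff_zero_right (n : ℕ) : kBesCoeff n 0 = 1 := by
  simp [kBesCoeff, Nat.factorial_ne_zero]

lemma kBesCoeff_succ_self (n : ℕ) :
    kBesCoeff (n + 1) (n + 1) = (2 * n + 1) * kBesCoeff n n := by
  unfold kBesCoeff
  rw [show n + 1 + (n + 1) = 2 * n + 1 + 1 by ring, show n + n = 2 * n by ring,
    Nat.sub_self, Nat.sub_self, Nat.factorial_succ (2 * n + 1), Nat.factorial_succ (2 * n),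
    Nat.factorial_succ n]
  push_cast
  field_simp
  ring

-- `l < n` is needed: `kBesCoeff n (n + 1)` is not `0`, because `n - (n + 1)` truncates to `0`.
lemma kBesCoeff_succ_succ {n l : ℕ} (h : l < n) :
    kBesCoeff (n + 1) (l + 1) = kBesCoeff n (l + 1) + (n + l + 1) * kBesCoeff n l := by
  obtain ⟨m, rfl⟩ : ∃ m, n = m + l + 1 := ⟨n - l - 1, by omega⟩
  unfold kBesCoeff
  rw [show m + l + 1 + 1 + (l + 1) = m + 2 * l + 2 + 1 by ring,
    show m + l + 1 + (l + 1) = m + 2 * l + 1 + 1 by ring,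
    show m + l + 1 + l = m + 2 * l + 1 by ring,
    show m + l + 1 + 1 - (l + 1) = m + 1 by omega, show m + l + 1 - (l + 1) = m by omega,
    show m + l + 1 - l = m + 1 by omega, Nat.factorial_succ (m + 2 * l + 2),
    Nat.factorial_succ (m + 2 * l + 1), Nat.factorial_succ l, Nat.factorial_succ m]
  push_cast
  field_simp
  ring

lemma sum_range_kBesCoeff_succ_mul (n : ℕ) (g : ℕ → ℝ) :
    ∑ l ∈ range (n + 2), kBesCoeff (n + 1) l * g l
      = ∑ l ∈ range (n + 1), kBesCoeff n l * (g l + (n + l + 1) * g (l + 1)) := by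
  have inner : ∀ l ∈ range n, kBesCoeff (n + 1) (l + 1) * g (l + 1)
      = kBesCoeff n (l + 1) * g (l + 1) + kBesCoeff n l * ((n + l + 1) * g (l + 1)) := by
    intro l hl
    rw [kBesCoeff_succ_succ (mem_range.mp hl)]
    ring
  simp only [mul_add, sum_add_distrib]
  rw [sum_range_succ', sum_range_succ, sum_congr rfl inner, sum_add_distrib, sum_range_succ',
    sum_range_succ _ n, kBesCoeff_zero_right, kBesCoeff_zero_right, kBesCoeff_succ_self]
  ring

lemma kBes_eq_sum (n : ℕ) (x : ℝ) :
    kBes n x = exp (-x) * ∑ l ∈ range (n + 1), kBesCoeff n l / x ^ (l + 1) := by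
  unfold kBes kBesCoeff
  rw [mul_sum, mul_sum]
  refine sum_congr rfl fun l _ => ?_
  rw [mul_pow, pow_succ]
  ring

lemma kBes_mul_sub_eq (n : ℕ) {x : ℝ} (hx : x ≠ 0) :
    n * kBes n x - x * kBes (n + 1) x
      = -(exp (-x) * ∑ l ∈ range (n + 1), kBesCoeff n l * (x + l + 1) / x ^ (l + 1)) := by
  simp only [kBes_eq_sum, div_eq_mul_inv]
  rw [sum_range_kBesCoeff_succ_mul n fun l => (x ^ (l + 1))⁻¹]
  simp only [mul_sum, ← sum_sub_distrib, ← sum_neg_distrib]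
  refine sum_congr rfl fun l _ => ?_
  field_simp
  ring

lemma kBes_mul_sub_neg (n : ℕ) {x : ℝ} (hx : 0 < x) :
    n * kBes n x - x * kBes (n + 1) x < 0 := by
  rw [kBes_mul_sub_eq n hx.ne', neg_lt_zero]
  refine mul_pos (exp_pos _) <| sum_pos (fun l _ => ?_) nonempty_range_add_one
  have := kBesCoeff_pos n l
  positivity

lemma hasDerivAt_kBes (n : ℕ) {x : ℝ} (hx : x ≠ 0) :
    HasDerivAt (kBes n) ((n * kBes n x - x * kBes (n + 1) x) / x) x := by
  have hexp : HasDerivAt (fun y : ℝ => exp (-y)) (-exp (-x)) x := by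
    simpa using (hasDerivAt_neg x).exp
  have hsum : HasDerivAt (fun y : ℝ => ∑ l ∈ range (n + 1), kBesCoeff n l / y ^ (l + 1))
      (∑ l ∈ range (n + 1), -(kBesCoeff n l * (l + 1)) / x ^ (l + 2)) x := by
    refine HasDerivAt.fun_sum fun l _ => ?_
    simp only [div_eq_mul_inv]
    refine (((hasDerivAt_pow (l + 1) x).inv (pow_ne_zero _ hx)).const_mul _).congr_deriv ?_
    field_simp
    push_cast
    ring
  rw [kBes_mul_sub_eq n hx, show kBes n = _ from funext (kBes_eq_sum n)]
  refine (hexp.mul hsum).congr_deriv ?_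
  simp only [mul_sum, neg_div, sum_div, ← sum_add_distrib, ← sum_neg_distrib]
  refine sum_congr rfl fun l _ => ?_
  field_simp
  ring

/-- For every integer `n ≥ 0` and every real `x > 0`, `n·k_n(x) − x·k_{n+1}(x) < 0`;
equivalently the derivative of `k_n` is strictly negative at every `x > 0`, so `k_n`
is strictly decreasing on `(0, ∞)`. -/
theorem kBes_decreasing (n : ℕ) :
    (∀ x : ℝ, 0 < x →
      (n : ℝ) * kBes n x - x * kBes (n + 1) x < 0 ∧ deriv (kBes n) x < 0) ∧
    StrictAntiOn (kBes n) (Set.Ioi 0) := by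
  have hderiv : ∀ x ∈ Set.Ioi (0 : ℝ), deriv (kBes n) x < 0 := fun x hx => by
    rw [(hasDerivAt_kBes n (ne_of_gt hx)).deriv]
    exact div_neg_of_neg_of_pos (kBes_mul_sub_neg n hx) hx
  refine ⟨fun x hx => ⟨kBes_mul_sub_neg n hx, hderiv x hx⟩, ?_⟩
  refine strictAntiOn_of_deriv_neg (convex_Ioi 0) ?_ (by rwa [interior_Ioi])
  exact fun x hx => (hasDerivAt_kBes n (ne_of_gt hx)).continuousAt.continuousWithinAt
end
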